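/- arXiv:2305.07476 — 6 statements merged into one kernel-verified Lean document; each statement's English description precedes it below -/
import Mathlib

section
/- Let H be a complex Hilbert space, U ⊆ ℂᵐ open, and w : U → Aut(H) a smooth map into the continuous linear automorphisms of H such that for each t ∈ U, h_t(u,v) := ⟨w(t)u, v⟩ defines an inner product on H whose norm is equivalent to the original norm. Let H₀ ⊆ H be a closed subspace, and let P(t) : H → H₀ denote the h_t-orthogonal projection. Then the map U × H → H₀, (t,u) ↦ P(t)u, is smooth (in the Fréchet sense). -/
/-!
Compressing `w t` to `H₀` gives `T t := π ∘ w t ∘ ι ∈ End(H₀)`, where `π` is the orthogonal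
projection for the original inner product. The `h_t`-orthogonality of `u - P t u` to `H₀` says
exactly `T t (P t u) = π (w t u)`, and `T t` is coercive, hence invertible by the Lax–Milgram
argument. So `P t u = (T t)⁻¹ (π (w t u))`, which is smooth in `(t, u)` because `t ↦ T t` is
the composite of `w` with a continuous linear map and inversion is smooth on the units of the
Banach algebra `End(H₀)`.
-/

open ContinuousLinearMap RCLike

section Smoothness

variable {𝕜 𝕜' : Type*} [NontriviallyNormedField 𝕜] [NontriviallyNormedField 𝕜']
  [NormedAlgebra 𝕜 𝕜'] {X F G : Type*} [NormedAddCommGroup X] [NormedSpace 𝕜 X]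
  [NormedAddCommGroup F] [NormedSpace 𝕜' F] [NormedSpace 𝕜 F] [IsScalarTower 𝕜 𝕜' F]
  [NormedAddCommGroup G] [NormedSpace 𝕜' G] [NormedSpace 𝕜 G] [IsScalarTower 𝕜 𝕜' G]
  {n : WithTop ℕ∞} {s : Set X}

theorem ContDiffOn.clm_apply_restrictScalars {A : X → F →L[𝕜'] G} {f : X → F}
    (hA : ContDiffOn 𝕜 n A s) (hf : ContDiffOn 𝕜 n f s) :
    ContDiffOn 𝕜 n (fun x => A x (f x)) s :=
  ((restrictScalarsL 𝕜' F G 𝕜 𝕜).contDiff.comp_contDiffOn hA).clm_apply hf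

theorem ContDiffOn.ringInverse {R : Type*} [NormedRing R] [NormedAlgebra 𝕜 R]
    [HasSummableGeomSeries R] {f : X → R} (hf : ContDiffOn 𝕜 n f s)
    (hunit : ∀ x ∈ s, IsUnit (f x)) : ContDiffOn 𝕜 n (fun x => Ring.inverse (f x)) s := by
  intro x hx
  obtain ⟨u, hu⟩ := hunit x hx
  exact (hu ▸ contDiffAt_ringInverse 𝕜 u).comp_contDiffWithinAt x (hf x hx)

end Smoothness

section Coercive

variable {𝕜 F : Type*} [RCLike 𝕜] [NormedAddCommGroup F] [InnerProductSpace 𝕜 F]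

theorem ContinuousLinearMap.mul_norm_le_norm_apply_of_coercive (T : F →L[𝕜] F) {c : ℝ}
    (hT : ∀ x, c * ‖x‖ ^ 2 ≤ re (inner 𝕜 (T x) x)) (x : F) :
    c * ‖x‖ ≤ ‖T x‖ := by
  rcases (norm_nonneg x).eq_or_lt with hx | hx
  · simp [← hx]
  refine le_of_mul_le_mul_right ?_ hx
  calc c * ‖x‖ * ‖x‖ = c * ‖x‖ ^ 2 := by ring
    _ ≤ re (inner 𝕜 (T x) x) := hT x
    _ ≤ ‖T x‖ * ‖x‖ := (re_le_norm _).trans (norm_inner_le_norm _ _)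

theorem ContinuousLinearMap.isUnit_of_coercive [CompleteSpace F] (T : F →L[𝕜] F) {c : ℝ}
    (hc : 0 < c) (hT : ∀ x, c * ‖x‖ ^ 2 ≤ re (inner 𝕜 (T x) x)) : IsUnit T := by
  have hanti : AntilipschitzWith (Real.toNNReal c⁻¹) T := by
    refine T.antilipschitz_of_bound fun x => ?_
    rw [Real.coe_toNNReal _ (inv_nonneg.mpr hc.le), inv_mul_eq_div, le_div_iff₀' hc]
    exact T.mul_norm_le_norm_apply_of_coercive hT x
  have : CompleteSpace T.range :=
    (hanti.isClosed_range T.uniformContinuous).completeSpace_coe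
  have horth : T.rangeᗮ = ⊥ := by
    refine (Submodule.eq_bot_iff _).mpr fun y hy => ?_
    have hTy : inner 𝕜 (T y) y = 0 :=
      (Submodule.mem_orthogonal _ y).mp hy (T y) (LinearMap.mem_range_self _ y)
    have : c * ‖y‖ ^ 2 ≤ 0 := by simpa [hTy] using hT y
    exact norm_eq_zero.mp (pow_eq_zero_iff two_ne_zero |>.mp <|
      le_antisymm (nonpos_of_mul_nonpos_right this hc) (by positivity))
  exact isUnit_iff_bijective.mpr
    ⟨hanti.injective, LinearMap.range_eq_top.mp (Submodule.orthogonal_eq_bot_iff.mp horth)⟩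

end Coercive

namespace Submodule

variable {𝕜 E : Type*} [RCLike 𝕜] [NormedAddCommGroup E] [InnerProductSpace 𝕜 E]
  (K : Submodule 𝕜 E) [K.HasOrthogonalProjection]

noncomputable def compressionL : (E →L[𝕜] E) →L[𝕜] K →L[𝕜] K :=
  ((compL 𝕜 K E K).flip K.subtypeL).comp (compL 𝕜 E E K K.orthogonalProjectionOnto)

theorem compressionL_apply (A : E →L[𝕜] E) (x : K) :
    K.compressionL A x = K.orthogonalProjectionOnto (A x) :=
  rfl

theorem contDiff_compressionL {n : WithTop ℕ∞} : ContDiff 𝕜 n K.compressionL :=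
  K.compressionL.contDiff

theorem inner_compressionL_apply (A : E →L[𝕜] E) (x y : K) :
    inner 𝕜 (K.compressionL A x) y = inner 𝕜 (A x) (y : E) := by
  rw [compressionL_apply, inner_orthogonalProjectionOnto_eq_of_mem_right]

theorem compressionL_apply_eq_of_inner_sub_eq_zero (A : E →L[𝕜] E) (u : E) (x : K)
    (h : ∀ v ∈ K, inner 𝕜 (A (u - x)) v = 0) :
    K.compressionL A x = K.orthogonalProjectionOnto (A u) := by
  refine ext_inner_right 𝕜 fun v => ?_
  have := h v v.2
  rw [map_sub, inner_sub_left, sub_eq_zero] at this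
  rw [inner_compressionL_apply, inner_orthogonalProjectionOnto_eq_of_mem_right, this]

theorem eq_ringInverse_compressionL_apply {A : E →L[𝕜] E}
    (hA : IsUnit (K.compressionL A)) (u : E) (x : K)
    (h : ∀ v ∈ K, inner 𝕜 (A (u - x)) v = 0) :
    x = Ring.inverse (K.compressionL A) (K.orthogonalProjectionOnto (A u)) := by
  rw [← K.compressionL_apply_eq_of_inner_sub_eq_zero A u x h, ← mul_apply_eq_comp,
    Ring.inverse_mul_cancel _ hA, one_apply_eq_self]

end Submodule

theorem statement_2_general {m : ℕ}
    {H : Type*} [NormedAddCommGroup H] [InnerProductSpace ℂ H] [CompleteSpace H]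
    (U : Set (Fin m → ℂ))
    (w : (Fin m → ℂ) → H →L[ℂ] H)
    (hw : ContDiffOn ℝ (⊤ : ℕ∞) w U)
    (hwpos : ∀ t ∈ U, ∃ c C : ℝ, 0 < c ∧ 0 < C ∧ ∀ u : H,
      c * ‖u‖ ^ 2 ≤ (inner ℂ (w t u) u : ℂ).re ∧ (inner ℂ (w t u) u : ℂ).re ≤ C * ‖u‖ ^ 2)
    (H₀ : Submodule ℂ H) (hH₀ : IsClosed (H₀ : Set H))
    (P : (Fin m → ℂ) → H → H)
    (hPmem : ∀ t ∈ U, ∀ u : H, P t u ∈ H₀)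
    (hPorth : ∀ t ∈ U, ∀ u : H, ∀ v ∈ H₀, (inner ℂ (w t (u - P t u)) v : ℂ) = 0) :
    ContDiffOn ℝ (⊤ : ℕ∞) (fun p : (Fin m → ℂ) × H => P p.1 p.2)
      (U ×ˢ (Set.univ : Set H)) := by
  have : CompleteSpace H₀ := hH₀.completeSpace_coe
  let T : (Fin m → ℂ) → H₀ →L[ℂ] H₀ := fun t => H₀.compressionL (w t)
  have hT : ContDiffOn ℝ (⊤ : ℕ∞) T U :=
    (H₀.contDiff_compressionL.restrict_scalars ℝ).comp_contDiffOn hw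
  have hunit : ∀ t ∈ U, IsUnit (T t) := fun t ht => by
    obtain ⟨c, _, hc, _, hcC⟩ := hwpos t ht
    refine (T t).isUnit_of_coercive hc fun x => ?_
    rw [H₀.inner_compressionL_apply]
    exact (hcC x).1
  have hP : ∀ t ∈ U, ∀ u, P t u = Ring.inverse (T t) (H₀.orthogonalProjectionOnto (w t u)) :=
    fun t ht u => congrArg Subtype.val <|
      H₀.eq_ringInverse_compressionL_apply (hunit t ht) u ⟨P t u, hPmem t ht u⟩ (hPorth t ht u)
  have hfst : Set.MapsTo Prod.fst (U ×ˢ (Set.univ : Set H)) U := fun p hp => hp.1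
  have hwu : ContDiffOn ℝ (⊤ : ℕ∞) (fun p : (Fin m → ℂ) × H => w p.1 p.2) (U ×ˢ Set.univ) :=
    (hw.comp contDiff_fst.contDiffOn hfst).clm_apply_restrictScalars contDiff_snd.contDiffOn
  refine ContDiffOn.congr ?_ fun p hp => hP p.1 hp.1 p.2
  exact (H₀.subtypeL.contDiff.restrict_scalars ℝ).comp_contDiffOn <|
    ((hT.ringInverse hunit).comp contDiff_fst.contDiffOn hfst).clm_apply_restrictScalars <|
      (H₀.orthogonalProjectionOnto.contDiff.restrict_scalars ℝ).comp_contDiffOn hwu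

/-- Berndtsson's regularity theorem, Hilbert-bundle version: `H` a complex
Hilbert space, `U ⊆ ℂᵐ` open, `w : U → Aut(H)` smooth such that each
`h_t(u,v) := ⟪w t u, v⟫` is an inner product equivalent to the original one, `H₀` a closed
subspace, and `P t` the `h_t`-orthogonal projection onto `H₀` (characterized by range and
orthogonality).  Then `(t, u) ↦ P t u` is smooth (Fréchet sense) on `U × H`. -/
theorem statement_2 {m : ℕ}
    {H : Type*} [NormedAddCommGroup H] [InnerProductSpace ℂ H] [CompleteSpace H]
    (U : Set (Fin m → ℂ)) (hU : IsOpen U)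
    (w : (Fin m → ℂ) → H →L[ℂ] H)
    (hw : ContDiffOn ℝ (⊤ : ℕ∞) w U)
    (hwherm : ∀ t ∈ U, ∀ u v : H, (inner ℂ (w t u) v : ℂ) = starRingEnd ℂ (inner ℂ (w t v) u))
    (hwpos : ∀ t ∈ U, ∃ c C : ℝ, 0 < c ∧ 0 < C ∧ ∀ u : H,
      c * ‖u‖ ^ 2 ≤ (inner ℂ (w t u) u : ℂ).re ∧ (inner ℂ (w t u) u : ℂ).re ≤ C * ‖u‖ ^ 2)
    (hwaut : ∀ t ∈ U, ∃ wi : H →L[ℂ] H, wi.comp (w t) = ContinuousLinearMap.id ℂ H ∧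
      (w t).comp wi = ContinuousLinearMap.id ℂ H)
    (H₀ : Submodule ℂ H) (hH₀ : IsClosed (H₀ : Set H))
    (P : (Fin m → ℂ) → H → H)
    (hPmem : ∀ t ∈ U, ∀ u : H, P t u ∈ H₀)
    (hPorth : ∀ t ∈ U, ∀ u : H, ∀ v ∈ H₀, (inner ℂ (w t (u - P t u)) v : ℂ) = 0) :
    ContDiffOn ℝ (⊤ : ℕ∞) (fun p : (Fin m → ℂ) × H => P p.1 p.2)
      (U ×ˢ (Set.univ : Set H)) :=
  statement_2_general U w hw hwpos H₀ hH₀ P hPmem hPorth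
end

section
/- Let H be a complex Hilbert space, U ⊆ ℂᵐ open, and h : U → (sesquilinear forms on H) a family of inner products with h_t(u,v) = ⟨w(t)u,v⟩ for a smooth map w : U → Aut(H). Fix (t₀, u₀) ∈ U × H and a closed subspace H₀. Define F : U × H × H₀ → H₀ by F(t,u,v) = P₀(w(t₀)⁻¹ w(t)(v−u)), where P₀ is the h_{t₀}-orthogonal projection onto H₀. Then F(t,u,v) = 0 if and only if v is the h_t-orthogonal projection of u onto H₀. -/
/-!
Write `x = w(t₀)⁻¹ w(t)(v − u)`, so that `h_{t₀}(x, v₀) = ⟪w t (v − u), v₀⟫`. Since `P₀` is the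
`h_{t₀}`-orthogonal projection, `h_{t₀}(P₀ x, v₀) = h_{t₀}(x, v₀)` for `v₀ ∈ H₀`. Hence `P₀ x = 0`
forces `v − u` to be `h_t`-orthogonal to `H₀`; conversely, if it is, then `h_{t₀}(P₀ x, P₀ x) = 0`
and coercivity of `h_{t₀}` gives `P₀ x = 0`.
-/

section WeightedProjection

variable {𝕜 E : Type*} [RCLike 𝕜] [NormedAddCommGroup E] [InnerProductSpace 𝕜 E]

theorem eq_zero_of_inner_map_self_eq_zero {A : E →L[𝕜] E} {c : ℝ} (hc : 0 < c)
    (hA : ∀ x, c * ‖x‖ ^ 2 ≤ RCLike.re (inner 𝕜 (A x) x)) {x : E}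
    (hx : inner 𝕜 (A x) x = 0) : x = 0 := by
  have hle : c * ‖x‖ ^ 2 ≤ 0 := by simpa [hx] using hA x
  have hnorm : ‖x‖ ^ 2 = 0 :=
    le_antisymm (nonpos_of_mul_nonpos_right hle hc) (sq_nonneg _)
  exact norm_eq_zero.mp (pow_eq_zero_iff two_ne_zero |>.mp hnorm)

variable {A : E →L[𝕜] E} {K : Submodule 𝕜 E} {P : E → E}

theorem inner_map_proj_eq (hP : ∀ x, ∀ k ∈ K, inner 𝕜 (A (x - P x)) k = 0)
    (x : E) {k : E} (hk : k ∈ K) : inner 𝕜 (A (P x)) k = inner 𝕜 (A x) k := by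
  have := hP x k hk
  rwa [map_sub, inner_sub_left, sub_eq_zero, eq_comm] at this

theorem proj_eq_zero_iff {c : ℝ} (hc : 0 < c)
    (hA : ∀ x, c * ‖x‖ ^ 2 ≤ RCLike.re (inner 𝕜 (A x) x))
    (hPmem : ∀ x, P x ∈ K) (hP : ∀ x, ∀ k ∈ K, inner 𝕜 (A (x - P x)) k = 0) (x : E) :
    P x = 0 ↔ ∀ k ∈ K, inner 𝕜 (A x) k = 0 := by
  constructor
  · intro h k hk
    rw [← inner_map_proj_eq hP x hk, h, map_zero, inner_zero_left]
  · intro h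
    refine eq_zero_of_inner_map_self_eq_zero hc hA ?_
    rw [inner_map_proj_eq hP x (hPmem x), h _ (hPmem x)]

end WeightedProjection

theorem statement_3_general {m : ℕ}
    {H : Type*} [NormedAddCommGroup H] [InnerProductSpace ℂ H]
    (U : Set (Fin m → ℂ))
    (w : (Fin m → ℂ) → H →L[ℂ] H)
    (hwpos : ∀ t ∈ U, ∃ c C : ℝ, 0 < c ∧ 0 < C ∧ ∀ u : H,
      c * ‖u‖ ^ 2 ≤ (inner ℂ (w t u) u : ℂ).re ∧ (inner ℂ (w t u) u : ℂ).re ≤ C * ‖u‖ ^ 2)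
    (t₀ : Fin m → ℂ) (ht₀ : t₀ ∈ U)
    (wi₀ : H →L[ℂ] H) (hwi₀r : ∀ x : H, w t₀ (wi₀ x) = x)
    (H₀ : Submodule ℂ H)
    (P₀ : H → H) (hP₀mem : ∀ x : H, P₀ x ∈ H₀)
    (hP₀orth : ∀ x : H, ∀ v ∈ H₀, (inner ℂ (w t₀ (x - P₀ x)) v : ℂ) = 0)
    (t : Fin m → ℂ) (u v : H) :
    P₀ (wi₀ (w t (v - u))) = 0 ↔ ∀ v₀ ∈ H₀, (inner ℂ (w t (u - v)) v₀ : ℂ) = 0 := by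
  obtain ⟨c, _, hc, -, hcoer⟩ := hwpos t₀ ht₀
  rw [proj_eq_zero_iff hc (fun x => (hcoer x).1) hP₀mem hP₀orth, hwi₀r]
  refine forall₂_congr fun v₀ _ => ?_
  rw [← neg_sub u v, map_neg, inner_neg_left, neg_eq_zero]

/-- With `h_t(u,v) = ⟪w t u, v⟫` a smooth family of weighted inner products,
`t₀ ∈ U` fixed, `P₀` the `h_{t₀}`-orthogonal projection onto the closed subspace `H₀`, and
`F(t,u,v) = P₀(w(t₀)⁻¹ w(t)(v − u))`, one has, for `v ∈ H₀`:
`F(t,u,v) = 0` iff `v` is the `h_t`-orthogonal projection of `u` onto `H₀`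
(i.e. `⟪w t (u − v), v₀⟫ = 0` for all `v₀ ∈ H₀`). -/
theorem statement_3 {m : ℕ}
    {H : Type*} [NormedAddCommGroup H] [InnerProductSpace ℂ H] [CompleteSpace H]
    (U : Set (Fin m → ℂ)) (hU : IsOpen U)
    (w : (Fin m → ℂ) → H →L[ℂ] H)
    (hw : ContDiffOn ℝ (⊤ : ℕ∞) w U)
    (hwherm : ∀ t ∈ U, ∀ u v : H, (inner ℂ (w t u) v : ℂ) = starRingEnd ℂ (inner ℂ (w t v) u))
    (hwpos : ∀ t ∈ U, ∃ c C : ℝ, 0 < c ∧ 0 < C ∧ ∀ u : H,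
      c * ‖u‖ ^ 2 ≤ (inner ℂ (w t u) u : ℂ).re ∧ (inner ℂ (w t u) u : ℂ).re ≤ C * ‖u‖ ^ 2)
    (t₀ : Fin m → ℂ) (ht₀ : t₀ ∈ U)
    (wi₀ : H →L[ℂ] H) (hwi₀l : ∀ x : H, wi₀ (w t₀ x) = x) (hwi₀r : ∀ x : H, w t₀ (wi₀ x) = x)
    (H₀ : Submodule ℂ H) (hH₀ : IsClosed (H₀ : Set H))
    (P₀ : H → H) (hP₀mem : ∀ x : H, P₀ x ∈ H₀)
    (hP₀orth : ∀ x : H, ∀ v ∈ H₀, (inner ℂ (w t₀ (x - P₀ x)) v : ℂ) = 0)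
    (t : Fin m → ℂ) (ht : t ∈ U) (u v : H) (hv : v ∈ H₀) :
    P₀ (wi₀ (w t (v - u))) = 0 ↔ ∀ v₀ ∈ H₀, (inner ℂ (w t (u - v)) v₀ : ℂ) = 0 :=
  statement_3_general U w hwpos t₀ ht₀ wi₀ hwi₀r H₀ P₀ hP₀mem hP₀orth t u v
end

section
/- Let U ⊆ ℂᵐ be open, H a complex Hilbert space, H₀ ⊆ H a closed subspace (closed with respect to all h_t), h a smoothly varying family of inner products admitting Chern connection D = δ + ∂̄ on U × H, and P(t) the h_t-orthogonal projection onto H₀. Then the Chern connection of H₀ (with respect to the restricted metric) exists if and only if u ↦ P δ u is smooth on smooth H₀-valued sections, in which case it equals D₀ = Pδ + ∂̄. -/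
/-- The (1,0)-part of the real Fréchet derivative of `u` at `t` in direction `z`:
`∂u(z) = ½(Du(z) − i·Du(i·z))`. -/
noncomputable def del {E F : Type*} [NormedAddCommGroup E] [NormedSpace ℂ E]
    [NormedAddCommGroup F] [NormedSpace ℂ F] (u : E → F) (t z : E) : F :=
  (2⁻¹ : ℂ) • (fderiv ℝ u t z - Complex.I • fderiv ℝ u t (Complex.I • z))

/-- The (0,1)-part of the real Fréchet derivative of `u` at `t` in direction `z`:
`∂̄u(z) = ½(Du(z) + i·Du(i·z))`. -/
noncomputable def delbar {E F : Type*} [NormedAddCommGroup E] [NormedSpace ℂ E]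
    [NormedAddCommGroup F] [NormedSpace ℂ F] (u : E → F) (t z : E) : F :=
  (2⁻¹ : ℂ) • (fderiv ℝ u t z + Complex.I • fderiv ℝ u t (Complex.I • z))

/-- `H₀ ⊆ H` a closed subspace (closed for all `h_t`), `h` a smoothly varying
family of inner products with Chern connection `D = δ + ∂̄`, and `P t` the `h_t`-orthogonal
projection onto `H₀`.  Then the Chern connection of `H₀` (for the restricted metric) exists
— an operator `δ₀` sending smooth `H₀`-valued sections to smooth `H₀`-valued `(1,0)`-forms
and metric-compatible on `H₀` — iff `u ↦ P(δu)` is smooth on smooth `H₀`-valued sections;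
and any such `δ₀` equals `Pδ`. -/
theorem statement_12 {m : ℕ} {H : Type*} [NormedAddCommGroup H] [NormedSpace ℂ H]
    (U : Set (Fin m → ℂ)) (hU : IsOpen U)
    (H₀ : Submodule ℂ H) (hH₀ : IsClosed (H₀ : Set H))
    (h : (Fin m → ℂ) → H → H → ℂ)
    (hadd : ∀ t ∈ U, ∀ u v w' : H, h t (u + v) w' = h t u w' + h t v w')
    (hsub : ∀ t ∈ U, ∀ u v w' : H, h t (u - v) w' = h t u w' - h t v w')
    (hsmul : ∀ t ∈ U, ∀ (c : ℂ) (u v : H), h t (c • u) v = c * h t u v)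
    (hsymm : ∀ t ∈ U, ∀ u v : H, h t u v = starRingEnd ℂ (h t v u))
    (hpos : ∀ t ∈ U, ∀ u : H, u ≠ 0 → 0 < (h t u u).re)
    (P : (Fin m → ℂ) → H → H)
    (hPmem : ∀ t ∈ U, ∀ u : H, P t u ∈ H₀)
    (hPorth : ∀ t ∈ U, ∀ u : H, ∀ v ∈ H₀, h t (u - P t u) v = 0)
    (δ : ((Fin m → ℂ) → H) → (Fin m → ℂ) → (Fin m → ℂ) → H)
    (hδ : ∀ u v : (Fin m → ℂ) → H, ContDiffOn ℝ (⊤ : ℕ∞) u U → ContDiffOn ℝ (⊤ : ℕ∞) v U →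
      ∀ t ∈ U, ∀ z : Fin m → ℂ,
        del (fun s => h s (u s) (v s)) t z = h t (δ u t z) (v t) + h t (u t) (delbar v t z))
    (hδsm : ∀ u : (Fin m → ℂ) → H, ContDiffOn ℝ (⊤ : ℕ∞) u U →
      ∀ z : Fin m → ℂ, ContDiffOn ℝ (⊤ : ℕ∞) (fun t => δ u t z) U) :
    ((∃ δ₀ : ((Fin m → ℂ) → H) → (Fin m → ℂ) → (Fin m → ℂ) → H,
        (∀ u : (Fin m → ℂ) → H, ContDiffOn ℝ (⊤ : ℕ∞) u U → (∀ t ∈ U, u t ∈ H₀) →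
          ∀ t ∈ U, ∀ z : Fin m → ℂ, δ₀ u t z ∈ H₀) ∧
        (∀ u : (Fin m → ℂ) → H, ContDiffOn ℝ (⊤ : ℕ∞) u U → (∀ t ∈ U, u t ∈ H₀) →
          ∀ z : Fin m → ℂ, ContDiffOn ℝ (⊤ : ℕ∞) (fun t => δ₀ u t z) U) ∧
        (∀ u v : (Fin m → ℂ) → H, ContDiffOn ℝ (⊤ : ℕ∞) u U → (∀ t ∈ U, u t ∈ H₀) →
          ContDiffOn ℝ (⊤ : ℕ∞) v U → (∀ t ∈ U, v t ∈ H₀) →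
          ∀ t ∈ U, ∀ z : Fin m → ℂ,
            del (fun s => h s (u s) (v s)) t z
              = h t (δ₀ u t z) (v t) + h t (u t) (delbar v t z)))
      ↔ (∀ u : (Fin m → ℂ) → H, ContDiffOn ℝ (⊤ : ℕ∞) u U → (∀ t ∈ U, u t ∈ H₀) →
          ∀ z : Fin m → ℂ, ContDiffOn ℝ (⊤ : ℕ∞) (fun t => P t (δ u t z)) U))
    ∧ (∀ δ₀ : ((Fin m → ℂ) → H) → (Fin m → ℂ) → (Fin m → ℂ) → H,
        (∀ u : (Fin m → ℂ) → H, ContDiffOn ℝ (⊤ : ℕ∞) u U → (∀ t ∈ U, u t ∈ H₀) →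
          ∀ t ∈ U, ∀ z : Fin m → ℂ, δ₀ u t z ∈ H₀) →
        (∀ u : (Fin m → ℂ) → H, ContDiffOn ℝ (⊤ : ℕ∞) u U → (∀ t ∈ U, u t ∈ H₀) →
          ∀ z : Fin m → ℂ, ContDiffOn ℝ (⊤ : ℕ∞) (fun t => δ₀ u t z) U) →
        (∀ u v : (Fin m → ℂ) → H, ContDiffOn ℝ (⊤ : ℕ∞) u U → (∀ t ∈ U, u t ∈ H₀) →
          ContDiffOn ℝ (⊤ : ℕ∞) v U → (∀ t ∈ U, v t ∈ H₀) →
          ∀ t ∈ U, ∀ z : Fin m → ℂ,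
            del (fun s => h s (u s) (v s)) t z
              = h t (δ₀ u t z) (v t) + h t (u t) (delbar v t z)) →
        ∀ u : (Fin m → ℂ) → H, ContDiffOn ℝ (⊤ : ℕ∞) u U → (∀ t ∈ U, u t ∈ H₀) →
          ∀ t ∈ U, ∀ z : Fin m → ℂ, δ₀ u t z = P t (δ u t z)) := by
  have uniq : ∀ δ₀ : ((Fin m → ℂ) → H) → (Fin m → ℂ) → (Fin m → ℂ) → H,
      (∀ u : (Fin m → ℂ) → H, ContDiffOn ℝ (⊤ : ℕ∞) u U → (∀ t ∈ U, u t ∈ H₀) →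
        ∀ t ∈ U, ∀ z : Fin m → ℂ, δ₀ u t z ∈ H₀) →
      (∀ u v : (Fin m → ℂ) → H, ContDiffOn ℝ (⊤ : ℕ∞) u U → (∀ t ∈ U, u t ∈ H₀) →
        ContDiffOn ℝ (⊤ : ℕ∞) v U → (∀ t ∈ U, v t ∈ H₀) →
        ∀ t ∈ U, ∀ z : Fin m → ℂ,
          del (fun s => h s (u s) (v s)) t z
            = h t (δ₀ u t z) (v t) + h t (u t) (delbar v t z)) →
      ∀ u : (Fin m → ℂ) → H, ContDiffOn ℝ (⊤ : ℕ∞) u U → (∀ t ∈ U, u t ∈ H₀) →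
        ∀ t ∈ U, ∀ z : Fin m → ℂ, δ₀ u t z = P t (δ u t z) := by
    intro δ₀ hmem hcompat u hu hu0 t ht z
    have key : ∀ w ∈ H₀, h t (δ₀ u t z) w = h t (δ u t z) w := by
      intro w hw
      have h1 := hcompat u (fun _ => w) hu hu0 contDiffOn_const (fun _ _ => hw) t ht z
      have h2 := hδ u (fun _ => w) hu contDiffOn_const t ht z
      exact add_right_cancel (h1.symm.trans h2)
    set a := δ₀ u t z with ha
    set b := P t (δ u t z) with hb
    have hab : a - b ∈ H₀ := H₀.sub_mem (hmem u hu hu0 t ht z) (hPmem t ht _)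
    have hz : h t (a - b) (a - b) = 0 := by
      rw [hsub t ht, key _ hab, ← hsub t ht, hPorth t ht _ _ hab]
    by_contra hne
    have hne' : a - b ≠ 0 := sub_ne_zero.mpr hne
    have := hpos t ht _ hne'
    rw [hz] at this
    simp at this
  refine ⟨⟨?_, ?_⟩, fun δ₀ h1 h2 h3 => uniq δ₀ h1 h3⟩
  · rintro ⟨δ₀, hm, hs, hc⟩ u hu hu0 z
    exact (hs u hu hu0 z).congr fun t ht => (uniq δ₀ hm hc u hu hu0 t ht z).symm
  · intro hsm
    refine ⟨fun u t z => P t (δ u t z), fun u hu hu0 t ht z => hPmem t ht _, hsm, ?_⟩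
    intro u v hu hu0 hv hv0 t ht z
    have h2 := hδ u v hu hv t ht z
    have h3 : h t (P t (δ u t z)) (v t) = h t (δ u t z) (v t) := by
      have h4 := hPorth t ht (δ u t z) (v t) (hv0 t ht)
      rw [hsub t ht] at h4
      exact (sub_eq_zero.mp h4).symm
    rw [h2, h3]
end

section
/- Let U ⊆ ℂᵐ be open, H a complex Hilbert space, h a smoothly varying metric on U × H with Chern connection D = δ + ∂̄, and suppose the Riesz map ♯ : H* → H with respect to h and its inverse are smooth in t. Then for smooth maps ξ : U → H* one has ∂̄ξ = ♯⁻¹ δ (♯ξ), i.e., ♯(∂̄ξ) = δ(♯ξ). -/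
/-- With `h` a smoothly varying metric admitting Chern connection `D = δ + ∂̄`
and the Riesz map `♯` (and its inverse) smooth in `t`, for a smooth map `ξ : U → H*` one has
`♯(∂̄ξ) = δ(♯ξ)`.  Here `s = ♯ξ` is characterized by `ξ t u = h t u (s t)` and `r t z`
represents `♯` applied to the component `∂̄_z ξ`, i.e. `(∂̄_z ξ)(u) = h t u (r t z)`. -/
theorem statement_13 {m : ℕ} {H : Type*} [NormedAddCommGroup H] [NormedSpace ℂ H]
    (U : Set (Fin m → ℂ)) (hU : IsOpen U)
    (h : (Fin m → ℂ) → H → H → ℂ)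
    (hadd : ∀ t ∈ U, ∀ u v w' : H, h t (u + v) w' = h t u w' + h t v w')
    (hsub : ∀ t ∈ U, ∀ u v w' : H, h t (u - v) w' = h t u w' - h t v w')
    (hsmul : ∀ t ∈ U, ∀ (c : ℂ) (u v : H), h t (c • u) v = c * h t u v)
    (hsymm : ∀ t ∈ U, ∀ u v : H, h t u v = starRingEnd ℂ (h t v u))
    (hpos : ∀ t ∈ U, ∀ u : H, u ≠ 0 → 0 < (h t u u).re)
    (δ : ((Fin m → ℂ) → H) → (Fin m → ℂ) → (Fin m → ℂ) → H)
    (hδ : ∀ u v : (Fin m → ℂ) → H, ContDiffOn ℝ (⊤ : ℕ∞) u U → ContDiffOn ℝ (⊤ : ℕ∞) v U →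
      ∀ t ∈ U, ∀ z : Fin m → ℂ,
        del (fun s => h s (u s) (v s)) t z = h t (δ u t z) (v t) + h t (u t) (delbar v t z))
    (ξ : (Fin m → ℂ) → (H →L[ℂ] ℂ)) (hξ : ContDiffOn ℝ (⊤ : ℕ∞) ξ U)
    (s : (Fin m → ℂ) → H) (hssm : ContDiffOn ℝ (⊤ : ℕ∞) s U)
    (hs : ∀ t ∈ U, ∀ u : H, ξ t u = h t u (s t))
    (r : (Fin m → ℂ) → (Fin m → ℂ) → H)
    (hr : ∀ t ∈ U, ∀ (z : Fin m → ℂ) (u : H),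
      delbar (fun s' => ξ s' u) t z = h t u (r t z)) :
    ∀ t ∈ U, ∀ z : Fin m → ℂ, r t z = δ s t z := by
  intro t ht z
  have hmemU : U ∈ nhds t := hU.mem_nhds ht
  have h0 : ∀ v : H, h t v 0 = 0 := by
    intro v
    have hz : h t 0 v = 0 := by
      have := hsmul t ht 0 0 v
      simpa using this
    rw [hsymm t ht v 0, hz]; simp
  have key : ∀ u : H, h t u (r t z) = h t u (δ s t z) := by
    intro u
    have hdb0 : delbar (fun _ : Fin m → ℂ => u) t z = 0 := by
      simp [delbar, fderiv_const]
    have hA : del (fun s' => h s' (s s') u) t z = h t (δ s t z) u := by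
      have := hδ s (fun _ => u) hssm contDiffOn_const t ht z
      rw [this, hdb0, h0, add_zero]
    have hev : (fun s' => h s' u (s s')) =ᶠ[nhds t]
        (fun s' => (starRingEnd ℂ) (h s' (s s') u)) := by
      filter_upwards [hmemU] with s' hs' using hsymm s' hs' u (s s')
    have hfd : ∀ w, fderiv ℝ (fun s' => h s' u (s s')) t w
        = (starRingEnd ℂ) (fderiv ℝ (fun s' => h s' (s s') u) t w) := by
      intro w
      rw [hev.fderiv_eq]
      have heq : (fun s' => (starRingEnd ℂ) (h s' (s s') u))
          = (Complex.conjCLE : ℂ ≃L[ℝ] ℂ) ∘ (fun s' => h s' (s s') u) := rfl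
      rw [heq, ContinuousLinearEquiv.comp_fderiv]
      rfl
    have hB : delbar (fun s' => h s' u (s s')) t z
        = (starRingEnd ℂ) (del (fun s' => h s' (s s') u) t z) := by
      simp only [delbar, del, hfd, smul_eq_mul, map_mul, map_sub, map_add,
        map_inv₀, Complex.conj_I, map_ofNat]
      ring
    have hev2 : (fun s' => ξ s' u) =ᶠ[nhds t] (fun s' => h s' u (s s')) := by
      filter_upwards [hmemU] with s' hs' using hs s' hs' u
    have hC : delbar (fun s' => ξ s' u) t z = delbar (fun s' => h s' u (s s')) t z := by
      simp only [delbar, hev2.fderiv_eq]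
    calc h t u (r t z) = delbar (fun s' => ξ s' u) t z := (hr t ht z u).symm
      _ = (starRingEnd ℂ) (h t (δ s t z) u) := by rw [hC, hB, hA]
      _ = h t u (δ s t z) := (hsymm t ht u _).symm
  set w := r t z - δ s t z with hw
  have hsec : ∀ v a b : H, h t v (a - b) = h t v a - h t v b := by
    intro v a b
    rw [hsymm t ht v (a - b), hsub t ht a b v, map_sub,
      ← hsymm t ht v a, ← hsymm t ht v b]
  have hww : h t w w = 0 := by
    have : h t w w = h t w (r t z) - h t w (δ s t z) := hsec w _ _
    rw [this, key w, sub_self]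
  by_contra hne
  have hwne : w ≠ 0 := sub_ne_zero.mpr hne
  have := hpos t ht w hwne
  rw [hww] at this
  simp at this
end

section
/- Let H be a holomorphic Hilbert bundle (e.g., trivial bundle U × H with U ⊆ ℂᵐ open) with smooth hermitian metric h, Chern connection D = δ + ∂̄ and curvature Θ, and let H₀ be a closed subbundle admitting Chern connection D₀ = δ₀ + ∂̄ with curvature Θ₀. Let S := δ − δ₀ be the second fundamental form. Then for all smooth local sections u, v of H₀: h(Θ₀ u, v) = h(Θ u, v) − h(Su, Sv). -/
/-- The `(z, z̄')`-component of the Chern curvature `Θ = δ∂̄ + ∂̄δ` (as a `(1,1)`-form),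
i.e. `Θ_{z z̄'} u = δ_z(∂̄_{z'} u) − ∂̄_{z'}(δ_z u)`. -/
noncomputable def curvC {m : ℕ} {H : Type*} [NormedAddCommGroup H] [NormedSpace ℂ H]
    (δ : ((Fin m → ℂ) → H) → (Fin m → ℂ) → (Fin m → ℂ) → H)
    (u : (Fin m → ℂ) → H) (t z z' : Fin m → ℂ) : H :=
  δ (fun s => delbar u s z') t z - delbar (fun s => δ u s z) t z'

/-!
Both `δ` and `δ₀` are compatible with `h`, so subtracting the two compatibility identities shows
that `S = δ - δ₀` maps sections of `H₀` into the `h`-orthogonal complement of `H₀`. Pointwise,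
`Θu - Θ₀u = S(∂̄u) - ∂̄(Su)`. The first term is orthogonal to `v`. Differentiating `h(v, Su) ≡ 0`
with the compatibility of `δ` turns `h(∂̄(Su), v)` into `-h(Su, δv)`, which equals `-h(Su, Sv)`
because `δ₀v` lies in `H₀`.
-/

open Filter Topology

section Calculus

variable {𝕜 : Type*} [NontriviallyNormedField 𝕜]
  {E F : Type*} [NormedAddCommGroup E] [NormedAddCommGroup F]

theorem Submodule.tangentConeAt_subset [NormedSpace 𝕜 F] (K : Submodule 𝕜 F)
    (hK : IsClosed (K : Set F)) {x : F} (hx : x ∈ K) : tangentConeAt 𝕜 (K : Set F) x ⊆ K := by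
  rw [tangentConeAt_eq_biInter_closure]
  refine fun y hy => hK.closure_subset_iff.2 ?_ (Set.mem_iInter₂.1 hy Set.univ univ_mem)
  rintro _ ⟨c, -, y, ⟨-, hy⟩, rfl⟩
  simpa using K.smul_mem c ((K.add_mem_iff_right hx).1 hy)

theorem fderiv_apply_mem_of_eventually_mem [NormedSpace 𝕜 E] [NormedSpace 𝕜 F]
    (K : Submodule 𝕜 F) (hK : IsClosed (K : Set F)) {f : E → F} {t : E}
    (hf : DifferentiableAt 𝕜 f t) (hmem : ∀ᶠ s in 𝓝 t, f s ∈ K) (z : E) :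
    fderiv 𝕜 f t z ∈ K := by
  obtain ⟨V, hV, hVK⟩ := hmem.exists_mem
  have hcone : z ∈ tangentConeAt 𝕜 V t := by simp [tangentConeAt_of_mem_nhds hV]
  exact K.tangentConeAt_subset hK (hVK t (mem_of_mem_nhds hV)) <|
    tangentConeAt_mono (Set.image_subset_iff.2 hVK) <|
      hf.hasFDerivAt.hasFDerivWithinAt.mapsTo_tangent_cone hcone

variable [NormedSpace ℂ E] [NormedSpace ℂ F]

theorem delbar_mem_of_eventually_mem (K : Submodule ℂ F) (hK : IsClosed (K : Set F))
    {f : E → F} {t : E} (hf : DifferentiableAt ℝ f t) (hmem : ∀ᶠ s in 𝓝 t, f s ∈ K) (z : E) :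
    delbar f t z ∈ K :=
  have hD := fderiv_apply_mem_of_eventually_mem (K.restrictScalars ℝ) hK hf hmem
  K.smul_mem _ (K.add_mem (hD z) (K.smul_mem _ (hD _)))

theorem delbar_sub {f g : E → F} {t : E} (hf : DifferentiableAt ℝ f t)
    (hg : DifferentiableAt ℝ g t) (z : E) :
    delbar (fun s => f s - g s) t z = delbar f t z - delbar g t z := by
  simp only [delbar, fderiv_fun_sub hf hg, sub_apply]
  module

theorem del_eq_zero_of_eventuallyEq_zero {f : E → F} {t : E} (hf : f =ᶠ[𝓝 t] 0) (z : E) :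
    del f t z = 0 := by
  simp [del, hf.fderiv_eq]

theorem ContDiffOn.delbar {n k : WithTop ℕ∞} {f : E → F} {U : Set E}
    (hf : ContDiffOn ℝ n f U) (hU : IsOpen U) (hkn : k + 1 ≤ n) (z : E) :
    ContDiffOn ℝ k (fun s => _root_.delbar f s z) U := by
  have hD (w : E) : ContDiffOn ℝ k (fun s => fderiv ℝ f s w) U :=
    (hf.fderiv_of_isOpen hU hkn).clm_apply contDiffOn_const
  exact ((hD z).add ((hD _).const_smul Complex.I)).const_smul (2⁻¹ : ℂ)

end Calculus

theorem sub_right_of_conj_symm {V : Type*} [AddGroup V] {B : V → V → ℂ}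
    (hsub : ∀ u v w : V, B (u - v) w = B u w - B v w)
    (hsymm : ∀ u v : V, B u v = starRingEnd ℂ (B v u)) (u v w : V) :
    B u (v - w) = B u v - B u w := by
  rw [hsymm, hsub, map_sub, ← hsymm, ← hsymm]

section Subbundle

variable {m : ℕ} {H : Type*} [NormedAddCommGroup H] [NormedSpace ℂ H]

def secondFundamentalForm (δ δ₀ : ((Fin m → ℂ) → H) → (Fin m → ℂ) → (Fin m → ℂ) → H)
    (u : (Fin m → ℂ) → H) (t z : Fin m → ℂ) : H :=
  δ u t z - δ₀ u t z

/-- `δ + ∂̄` is compatible with `h` on the sections satisfying `P`: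
`∂ h(u, v) = h(δu, v) + h(u, ∂̄v)`. -/
def IsMetricCompatible (U : Set (Fin m → ℂ)) (h : (Fin m → ℂ) → H → H → ℂ)
    (δ : ((Fin m → ℂ) → H) → (Fin m → ℂ) → (Fin m → ℂ) → H)
    (P : ((Fin m → ℂ) → H) → Prop) : Prop :=
  ∀ u v, P u → P v → ∀ t ∈ U, ∀ z : Fin m → ℂ,
    del (fun s => h s (u s) (v s)) t z = h t (δ u t z) (v t) + h t (u t) (delbar v t z)

variable {U : Set (Fin m → ℂ)} {h : (Fin m → ℂ) → H → H → ℂ}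
  {δ δ₀ : ((Fin m → ℂ) → H) → (Fin m → ℂ) → (Fin m → ℂ) → H} {P : ((Fin m → ℂ) → H) → Prop}

theorem secondFundamentalForm_orthogonal
    (hsub : ∀ t ∈ U, ∀ u v w : H, h t (u - v) w = h t u w - h t v w)
    (hδ : IsMetricCompatible U h δ P) (hδ₀ : IsMetricCompatible U h δ₀ P)
    {u v : (Fin m → ℂ) → H} (hu : P u) (hv : P v) {t : Fin m → ℂ} (ht : t ∈ U) (z : Fin m → ℂ) :
    h t (secondFundamentalForm δ δ₀ u t z) (v t) = 0 := by
  rw [secondFundamentalForm, hsub t ht]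
  linear_combination hδ₀ u v hu hv t ht z - hδ u v hu hv t ht z

theorem delbar_left_eq_neg_of_orthogonal
    (hsymm : ∀ t ∈ U, ∀ u v : H, h t u v = starRingEnd ℂ (h t v u))
    (hδ : IsMetricCompatible U h δ P) {v w : (Fin m → ℂ) → H} (hv : P v) (hw : P w)
    {t : Fin m → ℂ} (ht : t ∈ U) (horth : ∀ᶠ s in 𝓝 t, h s (v s) (w s) = 0) (z : Fin m → ℂ) :
    h t (delbar w t z) (v t) = - h t (w t) (δ v t z) := by
  have hcompat := hδ v w hv hw t ht z
  rw [del_eq_zero_of_eventuallyEq_zero horth] at hcompat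
  rw [hsymm t ht, eq_neg_of_add_eq_zero_right hcompat.symm, map_neg, ← hsymm t ht]

theorem curvC_sub_curvC {u : (Fin m → ℂ) → H} {t z : Fin m → ℂ}
    (hd : DifferentiableAt ℝ (fun s => δ u s z) t) (hd₀ : DifferentiableAt ℝ (fun s => δ₀ u s z) t)
    (z' : Fin m → ℂ) :
    curvC δ u t z z' - curvC δ₀ u t z z' =
      secondFundamentalForm δ δ₀ (fun s => delbar u s z') t z
        - delbar (fun s => secondFundamentalForm δ δ₀ u s z) t z' := by
  simp only [curvC, secondFundamentalForm, delbar_sub hd hd₀]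
  abel

end Subbundle

theorem statement_14_general {m : ℕ} {H : Type*} [NormedAddCommGroup H] [NormedSpace ℂ H]
    (U : Set (Fin m → ℂ)) (hU : IsOpen U)
    (H₀ : Submodule ℂ H) (hH₀ : IsClosed (H₀ : Set H))
    (h : (Fin m → ℂ) → H → H → ℂ)
    (hsub : ∀ t ∈ U, ∀ u v w' : H, h t (u - v) w' = h t u w' - h t v w')
    (hsymm : ∀ t ∈ U, ∀ u v : H, h t u v = starRingEnd ℂ (h t v u))
    (δ δ₀ : ((Fin m → ℂ) → H) → (Fin m → ℂ) → (Fin m → ℂ) → H)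
    -- `δ` is metric compatible and maps smooth sections to smooth forms:
    (hδ : ∀ u v : (Fin m → ℂ) → H, ContDiffOn ℝ (⊤ : ℕ∞) u U → ContDiffOn ℝ (⊤ : ℕ∞) v U →
      ∀ t ∈ U, ∀ z : Fin m → ℂ,
        del (fun s => h s (u s) (v s)) t z = h t (δ u t z) (v t) + h t (u t) (delbar v t z))
    (hδsm : ∀ u : (Fin m → ℂ) → H, ContDiffOn ℝ (⊤ : ℕ∞) u U →
      ∀ z : Fin m → ℂ, ContDiffOn ℝ (⊤ : ℕ∞) (fun t => δ u t z) U)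
    -- `δ₀` is the (1,0)-part of the Chern connection of the subbundle `H₀`:
    (hδ₀mem : ∀ u : (Fin m → ℂ) → H, ContDiffOn ℝ (⊤ : ℕ∞) u U → (∀ t ∈ U, u t ∈ H₀) →
      ∀ t ∈ U, ∀ z : Fin m → ℂ, δ₀ u t z ∈ H₀)
    (hδ₀sm : ∀ u : (Fin m → ℂ) → H, ContDiffOn ℝ (⊤ : ℕ∞) u U → (∀ t ∈ U, u t ∈ H₀) →
      ∀ z : Fin m → ℂ, ContDiffOn ℝ (⊤ : ℕ∞) (fun t => δ₀ u t z) U)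
    (hδ₀ : ∀ u v : (Fin m → ℂ) → H, ContDiffOn ℝ (⊤ : ℕ∞) u U → (∀ t ∈ U, u t ∈ H₀) →
      ContDiffOn ℝ (⊤ : ℕ∞) v U → (∀ t ∈ U, v t ∈ H₀) →
      ∀ t ∈ U, ∀ z : Fin m → ℂ,
        del (fun s => h s (u s) (v s)) t z = h t (δ₀ u t z) (v t) + h t (u t) (delbar v t z)) :
    ∀ u v : (Fin m → ℂ) → H, ContDiffOn ℝ (⊤ : ℕ∞) u U → (∀ t ∈ U, u t ∈ H₀) →
      ContDiffOn ℝ (⊤ : ℕ∞) v U → (∀ t ∈ U, v t ∈ H₀) →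
      ∀ t ∈ U, ∀ z z' : Fin m → ℂ,
        h t (curvC δ₀ u t z z') (v t)
          = h t (curvC δ u t z z') (v t)
            - h t (δ u t z - δ₀ u t z) (δ v t z' - δ₀ v t z') := by
  intro u v hu humem hv hvmem t ht z z'
  let P : ((Fin m → ℂ) → H) → Prop := fun a => ContDiffOn ℝ (⊤ : ℕ∞) a U ∧ ∀ s ∈ U, a s ∈ H₀
  have orth {a b} (ha : P a) (hb : P b) {s} (hs : s ∈ U) (w) :=
    secondFundamentalForm_orthogonal hsub (fun a b ha hb => hδ a b ha.1 hb.1)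
      (fun a b ha hb => hδ₀ a b ha.1 ha.2 hb.1 hb.2) ha hb hs w
  have diffAt {a : (Fin m → ℂ) → H} (ha : ContDiffOn ℝ (⊤ : ℕ∞) a U) {s} (hs : s ∈ U) :
      DifferentiableAt ℝ a s :=
    (ha.contDiffAt (hU.mem_nhds hs)).differentiableAt (by simp)
  have hP_delbar_u : P (fun s => delbar u s z') :=
    ⟨hu.delbar hU (by exact_mod_cast le_top) z', fun s hs =>
      delbar_mem_of_eventually_mem H₀ hH₀ (diffAt hu hs) ((hU.eventually_mem hs).mono humem) z'⟩
  have hP_δ₀v : P (fun s => δ₀ v s z') :=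
    ⟨hδ₀sm v hv hvmem z', fun s hs => hδ₀mem v hv hvmem s hs z'⟩
  have hSu : ContDiffOn ℝ (⊤ : ℕ∞) (fun s => secondFundamentalForm δ δ₀ u s z) U :=
    (hδsm u hu z).sub (hδ₀sm u hu humem z)
  have hdelbar_Su : h t (delbar (fun s => secondFundamentalForm δ δ₀ u s z) t z') (v t)
      = - h t (secondFundamentalForm δ δ₀ u t z) (δ v t z') := by
    refine delbar_left_eq_neg_of_orthogonal (P := (ContDiffOn ℝ (⊤ : ℕ∞) · U)) hsymm hδ hv hSu
      ht ?_ z'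
    filter_upwards [hU.mem_nhds ht] with s hs
    rw [hsymm s hs, orth ⟨hu, humem⟩ ⟨hv, hvmem⟩ hs, map_zero]
  calc h t (curvC δ₀ u t z z') (v t)
      = h t (curvC δ u t z z') (v t) - h t (curvC δ u t z z' - curvC δ₀ u t z z') (v t) := by
        rw [hsub t ht]; ring
    _ = h t (curvC δ u t z z') (v t) - h t (secondFundamentalForm δ δ₀ u t z) (δ v t z') := by
        rw [curvC_sub_curvC (diffAt (hδsm u hu z) ht) (diffAt (hδ₀sm u hu humem z) ht), hsub t ht,
          orth hP_delbar_u ⟨hv, hvmem⟩ ht, hdelbar_Su]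
        ring
    _ = h t (curvC δ u t z z') (v t) - h t (δ u t z - δ₀ u t z) (δ v t z' - δ₀ v t z') := by
        rw [sub_right_of_conj_symm (hsub t ht) (hsymm t ht), ← secondFundamentalForm,
          orth ⟨hu, humem⟩ hP_δ₀v ht, sub_zero]

/-- subbundle curvature formula: `h` a smooth hermitian metric on the trivial
bundle `U × H` with Chern connection `D = δ + ∂̄` and curvature `Θ`, `H₀` a closed subbundle
with Chern connection `D₀ = δ₀ + ∂̄` and curvature `Θ₀`, and `S = δ − δ₀` the second
fundamental form.  For all smooth `H₀`-valued sections `u, v` (componentwise in directions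
`z, z'`): `h(Θ₀u, v) = h(Θu, v) − h(S_z u, S_{z'} v)`. -/
theorem statement_14 {m : ℕ} {H : Type*} [NormedAddCommGroup H] [NormedSpace ℂ H]
    (U : Set (Fin m → ℂ)) (hU : IsOpen U)
    (H₀ : Submodule ℂ H) (hH₀ : IsClosed (H₀ : Set H))
    (h : (Fin m → ℂ) → H → H → ℂ)
    (hadd : ∀ t ∈ U, ∀ u v w' : H, h t (u + v) w' = h t u w' + h t v w')
    (hsub : ∀ t ∈ U, ∀ u v w' : H, h t (u - v) w' = h t u w' - h t v w')
    (hsmul : ∀ t ∈ U, ∀ (c : ℂ) (u v : H), h t (c • u) v = c * h t u v)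
    (hsymm : ∀ t ∈ U, ∀ u v : H, h t u v = starRingEnd ℂ (h t v u))
    (hpos : ∀ t ∈ U, ∀ u : H, u ≠ 0 → 0 < (h t u u).re)
    (δ δ₀ : ((Fin m → ℂ) → H) → (Fin m → ℂ) → (Fin m → ℂ) → H)
    -- `δ` is metric compatible and maps smooth sections to smooth forms:
    (hδ : ∀ u v : (Fin m → ℂ) → H, ContDiffOn ℝ (⊤ : ℕ∞) u U → ContDiffOn ℝ (⊤ : ℕ∞) v U →
      ∀ t ∈ U, ∀ z : Fin m → ℂ,
        del (fun s => h s (u s) (v s)) t z = h t (δ u t z) (v t) + h t (u t) (delbar v t z))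
    (hδsm : ∀ u : (Fin m → ℂ) → H, ContDiffOn ℝ (⊤ : ℕ∞) u U →
      ∀ z : Fin m → ℂ, ContDiffOn ℝ (⊤ : ℕ∞) (fun t => δ u t z) U)
    -- `δ₀` is the (1,0)-part of the Chern connection of the subbundle `H₀`:
    (hδ₀mem : ∀ u : (Fin m → ℂ) → H, ContDiffOn ℝ (⊤ : ℕ∞) u U → (∀ t ∈ U, u t ∈ H₀) →
      ∀ t ∈ U, ∀ z : Fin m → ℂ, δ₀ u t z ∈ H₀)
    (hδ₀sm : ∀ u : (Fin m → ℂ) → H, ContDiffOn ℝ (⊤ : ℕ∞) u U → (∀ t ∈ U, u t ∈ H₀) →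
      ∀ z : Fin m → ℂ, ContDiffOn ℝ (⊤ : ℕ∞) (fun t => δ₀ u t z) U)
    (hδ₀ : ∀ u v : (Fin m → ℂ) → H, ContDiffOn ℝ (⊤ : ℕ∞) u U → (∀ t ∈ U, u t ∈ H₀) →
      ContDiffOn ℝ (⊤ : ℕ∞) v U → (∀ t ∈ U, v t ∈ H₀) →
      ∀ t ∈ U, ∀ z : Fin m → ℂ,
        del (fun s => h s (u s) (v s)) t z = h t (δ₀ u t z) (v t) + h t (u t) (delbar v t z)) :
    ∀ u v : (Fin m → ℂ) → H, ContDiffOn ℝ (⊤ : ℕ∞) u U → (∀ t ∈ U, u t ∈ H₀) →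
      ContDiffOn ℝ (⊤ : ℕ∞) v U → (∀ t ∈ U, v t ∈ H₀) →
      ∀ t ∈ U, ∀ z z' : Fin m → ℂ,
        h t (curvC δ₀ u t z z') (v t)
          = h t (curvC δ u t z z') (v t)
            - h t (δ u t z - δ₀ u t z) (δ v t z' - δ₀ v t z') :=
  statement_14_general U hU H₀ hH₀ h hsub hsymm δ δ₀ hδ hδsm hδ₀mem hδ₀sm hδ₀
end

section
/- Let U ⊆ ℂᵐ be open, H a complex Hilbert space with smoothly varying metric h admitting Chern connection D = δ + ∂̄ with curvature Θ satisfying iΘ ≤_G 0 (Griffiths seminegative). Let f : [0,∞) → ℝ be twice differentiable, strictly increasing, and concave, with f'(x) + f''(x)·x ≥ 0 for all x ≥ 0. Then for every holomorphic local section u of H, the function t ↦ f(‖u(t)‖²_{h_t}) is plurisubharmonic. -/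
/-- Plurisubharmonicity (for the smooth functions occurring here): the complex Hessian is
positive semidefinite, componentwise `0 ≤ ∂_z ∂̄_z f` at every point of `U`, in every
direction `z`. -/
noncomputable def PshOn {m : ℕ} (f : (Fin m → ℂ) → ℝ) (U : Set (Fin m → ℂ)) : Prop :=
  ∀ t ∈ U, ∀ z : Fin m → ℂ,
    0 ≤ (del (fun s => delbar (fun s' => (f s' : ℂ)) s z) t z).re

/-!
For `φ = h(u, u)` with `∂̄u = 0`, metric compatibility gives `∂φ = h(δu, u)`, `∂̄φ = h(u, δu)` and
`∂∂̄φ = h(δu, δu) + h(u, ∂̄δu) = ‖δu‖² - h(u, Θu)`, so by the chain rule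
`∂∂̄ f(φ) = f''(φ) |h(δu, u)|² + f'(φ) (‖δu‖² - h(u, Θu))`.
Griffiths seminegativity makes `-h(u, Θu)` nonnegative. If `f''(φ) ≥ 0` every term is
nonnegative; otherwise Cauchy–Schwarz `|h(δu, u)|² ≤ ‖δu‖² φ` bounds the sum below by
`‖δu‖² (f'(φ) + f''(φ) φ) ≥ 0`. At `φ = 0` only one-sided derivatives of `f` exist, so `f'` and
`f''` are taken within `[0, ∞)`.
-/

open Complex ComplexConjugate Filter Set Topology

section Dolbeault

variable {E F : Type*} [NormedAddCommGroup E] [NormedSpace ℂ E]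
  [NormedAddCommGroup F] [NormedSpace ℂ F]

theorem del_congr_of_eventuallyEq {u v : E → F} {t : E} (huv : u =ᶠ[𝓝 t] v) (z : E) :
    del u t z = del v t z := by
  rw [del, del, huv.fderiv_eq]

theorem del_of_not_differentiableAt {u : E → F} {t : E} (hu : ¬DifferentiableAt ℝ u t)
    (z : E) : del u t z = 0 := by
  simp [del, fderiv_zero_of_not_differentiableAt hu]

theorem del_mul {p q : E → ℂ} {t : E} (hp : DifferentiableAt ℝ p t)
    (hq : DifferentiableAt ℝ q t) (z : E) :
    del (fun s => p s * q s) t z = del p t z * q t + p t * del q t z := by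
  simp only [del, fderiv_fun_mul hp hq, add_apply, smul_apply, smul_eq_mul]
  ring

theorem del_ofReal {G : E → ℝ} {DG : E →L[ℝ] ℝ} {t : E} (hG : HasFDerivAt G DG t) (z : E) :
    del (fun s => (G s : ℂ)) t z = 2⁻¹ * (DG z - I * DG (I • z)) := by
  have hG' : HasFDerivAt (fun s => (G s : ℂ)) (ofRealCLM.comp DG) t :=
    ofRealCLM.hasFDerivAt.comp t hG
  rw [del, hG'.fderiv]
  rfl

theorem delbar_ofReal {G : E → ℝ} {DG : E →L[ℝ] ℝ} {t : E} (hG : HasFDerivAt G DG t)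
    (z : E) : delbar (fun s => (G s : ℂ)) t z = 2⁻¹ * (DG z + I * DG (I • z)) := by
  have hG' : HasFDerivAt (fun s => (G s : ℂ)) (ofRealCLM.comp DG) t :=
    ofRealCLM.hasFDerivAt.comp t hG
  rw [delbar, hG'.fderiv]
  rfl

theorem delbar_ofReal_eq_conj_del {G : E → ℝ} {t : E} (hG : DifferentiableAt ℝ G t) (z : E) :
    delbar (fun s => (G s : ℂ)) t z = conj (del (fun s => (G s : ℂ)) t z) := by
  rw [delbar_ofReal hG.hasFDerivAt, del_ofReal hG.hasFDerivAt]
  simp [map_ofNat]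

theorem del_ofReal_comp {g : ℝ → ℝ} {G : E → ℝ} {DG : E →L[ℝ] ℝ} {t : E} {r : ℝ}
    (hG : HasFDerivAt G DG t) (hgG : HasFDerivAt (fun s => g (G s)) (r • DG) t) (z : E) :
    del (fun s => (g (G s) : ℂ)) t z = r * del (fun s => (G s : ℂ)) t z := by
  rw [del_ofReal hgG, del_ofReal hG]
  simp only [smul_apply, smul_eq_mul, ofReal_mul]
  ring

theorem delbar_ofReal_comp {g : ℝ → ℝ} {G : E → ℝ} {DG : E →L[ℝ] ℝ} {t : E} {r : ℝ}
    (hG : HasFDerivAt G DG t) (hgG : HasFDerivAt (fun s => g (G s)) (r • DG) t) (z : E) :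
    delbar (fun s => (g (G s) : ℂ)) t z = r * delbar (fun s => (G s : ℂ)) t z := by
  rw [delbar_ofReal hgG, delbar_ofReal hG]
  simp only [smul_apply, smul_eq_mul, ofReal_mul]
  ring

theorem delbar_add_conj_smul {v : E → F} {t : E} (hv : DifferentiableAt ℝ v t)
    (L : E →L[ℂ] ℂ) (z : E) :
    delbar (fun s => v s + conj (L (s - t)) • v s) t z = delbar v t z + conj (L z) • v t := by
  have hc : HasFDerivAt (fun s => conj (L (s - t)))
      (conjCLE.toContinuousLinearMap.comp (L.restrictScalars ℝ)) t := by
    have := (conjCLE.toContinuousLinearMap.comp (L.restrictScalars ℝ)).hasFDerivAt (x := t)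
    simpa [map_sub] using this.sub_const (conj (L t))
  rw [delbar, delbar, (hv.hasFDerivAt.fun_add (hc.fun_smul hv.hasFDerivAt)).fderiv]
  simp only [sub_self, map_zero, zero_smul, zero_add, add_apply,
    ContinuousLinearMap.smulRight_apply, ContinuousLinearMap.comp_apply,
    ContinuousLinearMap.coe_restrictScalars', ContinuousLinearEquiv.coe_coe,
    ContinuousAlgEquiv.coeCLE_apply, conjCAE_apply, map_smul, smul_eq_mul, map_mul, conj_I,
    neg_mul, neg_smul, smul_add, smul_neg, smul_smul]
  rw [← mul_assoc I I, I_mul_I]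
  module

theorem differentiableAt_of_mul_left {g φ : E → ℂ} {t : E} (hg : DifferentiableAt ℝ g t)
    (hgt : g t ≠ 0) (hgφ : DifferentiableAt ℝ (fun s => g s * φ s) t) :
    DifferentiableAt ℝ φ t := by
  refine ((hg.inv hgt).mul hgφ).congr_of_eventuallyEq ?_
  filter_upwards [hg.continuousAt.eventually_ne hgt] with s hs
  simp only [Pi.mul_apply, Pi.inv_apply]
  field_simp

end Dolbeault

structure IsHermitianMetric {H : Type*} [AddCommGroup H] [Module ℂ H] (B : H → H → ℂ) :
    Prop where
  add_left : ∀ x y w : H, B (x + y) w = B x w + B y w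
  smul_left : ∀ (c : ℂ) (x y : H), B (c • x) y = c * B x y
  conj_symm : ∀ x y : H, B x y = conj (B y x)
  re_pos : ∀ x : H, x ≠ 0 → 0 < (B x x).re

namespace IsHermitianMetric

variable {H : Type*} [AddCommGroup H] [Module ℂ H] {B : H → H → ℂ}

theorem zero_left (hB : IsHermitianMetric B) (w : H) : B 0 w = 0 := by
  simpa using hB.add_left 0 0 w

theorem add_right (hB : IsHermitianMetric B) (x y w : H) : B x (y + w) = B x y + B x w := by
  rw [hB.conj_symm, hB.add_left, map_add, ← hB.conj_symm, ← hB.conj_symm]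

theorem smul_right (hB : IsHermitianMetric B) (c : ℂ) (x y : H) :
    B x (c • y) = conj c * B x y := by
  rw [hB.conj_symm, hB.smul_left, map_mul, ← hB.conj_symm]

theorem zero_right (hB : IsHermitianMetric B) (x : H) : B x 0 = 0 := by
  rw [hB.conj_symm, hB.zero_left, map_zero]

theorem neg_left (hB : IsHermitianMetric B) (x y : H) : B (-x) y = -B x y := by
  simpa using hB.smul_left (-1) x y

theorem ofReal_re_self (hB : IsHermitianMetric B) (x : H) : ((B x x).re : ℂ) = B x x :=
  conj_eq_iff_re.mp (hB.conj_symm x x).symm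

theorem re_self_nonneg (hB : IsHermitianMetric B) (x : H) : 0 ≤ (B x x).re := by
  rcases eq_or_ne x 0 with rfl | hx
  · simp [hB.zero_left]
  · exact (hB.re_pos x hx).le

theorem normSq_le (hB : IsHermitianMetric B) (x y : H) :
    normSq (B x y) ≤ (B x x).re * (B y y).re := by
  let c : PreInnerProductSpace.Core ℂ H :=
    { inner := fun x y => B y x
      conj_inner_symm := fun x y => (hB.conj_symm y x).symm
      re_inner_nonneg := hB.re_self_nonneg
      add_left := fun x y w => hB.add_right w x y
      smul_left := fun x y c => hB.smul_right c y x }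
  have hcs : ‖B x y‖ * ‖B y x‖ ≤ (B y y).re * (B x x).re :=
    @InnerProductSpace.Core.inner_mul_inner_self_le ℂ H _ _ _ c y x
  rw [hB.conj_symm y x, RCLike.norm_conj, mul_comm (B y y).re] at hcs
  rwa [normSq_eq_norm_sq, sq]

end IsHermitianMetric

theorem derivWithin_Ici_add_mul_nonneg {f : ℝ → ℝ} (hf : MonotoneOn f (Ici 0))
    (hcond : ∀ x : ℝ, 0 ≤ x → 0 ≤ deriv f x + deriv (deriv f) x * x) {x : ℝ} (hx : 0 ≤ x) :
    0 ≤ derivWithin f (Ici 0) x + derivWithin (derivWithin f (Ici 0)) (Ici 0) x * x := by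
  rcases hx.eq_or_lt with rfl | hx
  · simpa using hf.derivWithin_nonneg
  have hev : derivWithin f (Ici 0) =ᶠ[𝓝 x] deriv f := by
    filter_upwards [Ioi_mem_nhds hx] with y hy
    exact derivWithin_of_mem_nhds (Ici_mem_nhds hy)
  rw [derivWithin_of_mem_nhds (Ici_mem_nhds hx), derivWithin_of_mem_nhds (Ici_mem_nhds hx),
    hev.deriv_eq]
  exact hcond x hx.le

section MetricCompatibility

variable {E H : Type*} [NormedAddCommGroup E] [NormedSpace ℂ E]
  [NormedAddCommGroup H] [NormedSpace ℂ H]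

def MetricCompatibleOn (U : Set E) (h : E → H → H → ℂ) (δ : (E → H) → E → E → H) : Prop :=
  ∀ u v : E → H, ContDiffOn ℝ (⊤ : ℕ∞) u U → ContDiffOn ℝ (⊤ : ℕ∞) v U → ∀ t ∈ U, ∀ z : E,
    del (fun s => h s (u s) (v s)) t z = h t (δ u t z) (v t) + h t (u t) (delbar v t z)

variable {U : Set E} {h : E → H → H → ℂ} {δ : (E → H) → E → E → H}

namespace MetricCompatibleOn

theorem eq_zero_of_not_differentiableAt (hδ : MetricCompatibleOn U h δ)
    (hU : IsOpen U) (hh : ∀ t ∈ U, IsHermitianMetric (h t)) {u v : E → H}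
    (hu : ContDiffOn ℝ (⊤ : ℕ∞) u U) (hv : ContDiffOn ℝ (⊤ : ℕ∞) v U) {t : E} (ht : t ∈ U)
    (hnd : ¬DifferentiableAt ℝ (fun s => h s (u s) (v s)) t) : h t (u t) (v t) = 0 := by
  obtain ⟨z, hz⟩ : ∃ z : E, z ≠ 0 := by
    by_contra! hE
    exact hnd ((differentiableAt_const (h t (u t) (v t))).congr_of_eventuallyEq
      (Eventually.of_forall fun s => by rw [(hE s).trans (hE t).symm]))
  obtain ⟨L, -, hLz⟩ := exists_dual_vector ℂ z (norm_ne_zero_iff.mpr hz)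
  have hLz0 : L z ≠ 0 := by rw [hLz]; exact ofReal_ne_zero.mpr (norm_ne_zero_iff.mpr hz)
  -- `del` of a non-differentiable function is `0`. Multiplying `v` by the antiholomorphic
  -- factor `1 + conj (L (s - t))` multiplies `h (u, v)` by `1 + L (s - t)`, so it stays
  -- non-differentiable, while `∂̄v` at `t` moves by `conj (L z) • v t`: comparing the two
  -- compatibility identities leaves `L z * h (u t, v t) = 0`.
  set v₁ : E → H := fun s => v s + conj (L (s - t)) • v s
  have hv₁ : ContDiffOn ℝ (⊤ : ℕ∞) v₁ U := hv.add <| (conjCLE.contDiff.comp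
    ((L.restrictScalars ℝ).contDiff.comp (contDiff_id.sub contDiff_const))).contDiffOn.smul hv
  have hg : DifferentiableAt ℝ (fun s => 1 + L (s - t)) t :=
    (differentiableAt_const 1).add
      ((L.restrictScalars ℝ).differentiableAt.comp t (differentiableAt_id.sub_const t))
  have hnd₁ : ¬DifferentiableAt ℝ (fun s => h s (u s) (v₁ s)) t := by
    refine fun hd => hnd (differentiableAt_of_mul_left hg (by simp) (hd.congr_of_eventuallyEq ?_))
    filter_upwards [hU.mem_nhds ht] with s hs
    rw [(hh s hs).add_right, (hh s hs).smul_right, conj_conj]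
    ring
  have e := hδ u v hu hv t ht z
  have e₁ := hδ u v₁ hu hv₁ t ht z
  rw [del_of_not_differentiableAt hnd] at e
  rw [del_of_not_differentiableAt hnd₁, show v₁ t = v t by simp [v₁],
    delbar_add_conj_smul ((hv.contDiffAt (hU.mem_nhds ht)).differentiableAt (by simp)),
    (hh t ht).add_right, (hh t ht).smul_right, conj_conj] at e₁
  exact (mul_eq_zero.mp (by linear_combination e - e₁)).resolve_left hLz0

theorem differentiableAt_of_ne_zero (hδ : MetricCompatibleOn U h δ)
    (hU : IsOpen U) (hh : ∀ t ∈ U, IsHermitianMetric (h t)) {u v : E → H}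
    (hu : ContDiffOn ℝ (⊤ : ℕ∞) u U) (hv : ContDiffOn ℝ (⊤ : ℕ∞) v U) {t : E} (ht : t ∈ U)
    (hut : u t ≠ 0) : DifferentiableAt ℝ (fun s => h s (u s) (v s)) t := by
  have hpos := ((hh t ht).re_pos _ hut).ne'
  have hconst : DifferentiableAt ℝ (fun s => h s (u s) (u t)) t := by
    by_contra hnd
    simp [hδ.eq_zero_of_not_differentiableAt hU hh hu contDiffOn_const ht hnd] at hpos
  by_contra hnd
  have hnd' : ¬DifferentiableAt ℝ (fun s => h s (u s) (v s + u t)) t := by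
    refine fun hd => hnd ((hd.sub hconst).congr_of_eventuallyEq ?_)
    filter_upwards [hU.mem_nhds ht] with s hs
    simp [(hh s hs).add_right]
  have e := hδ.eq_zero_of_not_differentiableAt hU hh hu hv ht hnd
  have e' := hδ.eq_zero_of_not_differentiableAt hU hh hu (hv.add contDiffOn_const) ht hnd'
  rw [(hh t ht).add_right, e, zero_add] at e'
  simp [e'] at hpos

theorem differentiableAt (hδ : MetricCompatibleOn U h δ)
    (hU : IsOpen U) (hh : ∀ t ∈ U, IsHermitianMetric (h t)) {u v : E → H}
    (hu : ContDiffOn ℝ (⊤ : ℕ∞) u U) (hv : ContDiffOn ℝ (⊤ : ℕ∞) v U) {t : E} (ht : t ∈ U) :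
    DifferentiableAt ℝ (fun s => h s (u s) (v s)) t := by
  rcases subsingleton_or_nontrivial H with hH | hH
  · refine (differentiableAt_const (0 : ℂ)).congr_of_eventuallyEq ?_
    filter_upwards [hU.mem_nhds ht] with s hs
    rw [Subsingleton.elim (u s) 0, (hh s hs).zero_left]
  by_cases hut : u t = 0
  · obtain ⟨a, ha⟩ := exists_ne (0 : H)
    have hua := hδ.differentiableAt_of_ne_zero hU hh (hu.add contDiffOn_const) hv ht
      (by simpa [hut] using ha)
    have ha' := hδ.differentiableAt_of_ne_zero hU hh contDiffOn_const hv ht ha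
    refine (hua.sub ha').congr_of_eventuallyEq ?_
    filter_upwards [hU.mem_nhds ht] with s hs
    simp [(hh s hs).add_left]
  · exact hδ.differentiableAt_of_ne_zero hU hh hu hv ht hut

theorem differentiableAt_re_metric_self (hδ : MetricCompatibleOn U h δ) (hU : IsOpen U)
    (hh : ∀ t ∈ U, IsHermitianMetric (h t)) {u : E → H} (hu : ContDiffOn ℝ (⊤ : ℕ∞) u U)
    {t : E} (ht : t ∈ U) : DifferentiableAt ℝ (fun s => (h s (u s) (u s)).re) t :=
  reCLM.differentiableAt.comp t (hδ.differentiableAt hU hh hu hu ht)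

theorem del_re_metric_self (hδ : MetricCompatibleOn U h δ) (hU : IsOpen U)
    (hh : ∀ t ∈ U, IsHermitianMetric (h t)) {u : E → H} (hu : ContDiffOn ℝ (⊤ : ℕ∞) u U)
    (hhol : ∀ t ∈ U, ∀ z, delbar u t z = 0) {t : E} (ht : t ∈ U) (z : E) :
    del (fun s => ((h s (u s) (u s)).re : ℂ)) t z = h t (δ u t z) (u t) := by
  have hev : (fun s => ((h s (u s) (u s)).re : ℂ)) =ᶠ[𝓝 t] fun s => h s (u s) (u s) := by
    filter_upwards [hU.mem_nhds ht] with s hs using (hh s hs).ofReal_re_self (u s)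
  rw [del_congr_of_eventuallyEq hev, hδ u u hu hu t ht z, hhol t ht z, (hh t ht).zero_right,
    add_zero]

theorem delbar_re_metric_self (hδ : MetricCompatibleOn U h δ) (hU : IsOpen U)
    (hh : ∀ t ∈ U, IsHermitianMetric (h t)) {u : E → H} (hu : ContDiffOn ℝ (⊤ : ℕ∞) u U)
    (hhol : ∀ t ∈ U, ∀ z, delbar u t z = 0) {t : E} (ht : t ∈ U) (z : E) :
    delbar (fun s => ((h s (u s) (u s)).re : ℂ)) t z = h t (u t) (δ u t z) := by
  rw [delbar_ofReal_eq_conj_del (hδ.differentiableAt_re_metric_self hU hh hu ht),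
    hδ.del_re_metric_self hU hh hu hhol ht, ← (hh t ht).conj_symm]

theorem hasFDerivAt_comp_re_metric_self (hδ : MetricCompatibleOn U h δ) (hU : IsOpen U)
    (hh : ∀ t ∈ U, IsHermitianMetric (h t)) {u : E → H} (hu : ContDiffOn ℝ (⊤ : ℕ∞) u U)
    {g : ℝ → ℝ} (hg : DifferentiableOn ℝ g (Ici 0)) {t : E} (ht : t ∈ U) :
    HasFDerivAt (fun s => g (h s (u s) (u s)).re)
      (derivWithin g (Ici 0) (h t (u t) (u t)).re •
        fderiv ℝ (fun s => (h s (u s) (u s)).re) t) t := by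
  refine (hg _ ((hh t ht).re_self_nonneg _)).hasDerivWithinAt.comp_hasFDerivAt t
    (hδ.differentiableAt_re_metric_self hU hh hu ht).hasFDerivAt ?_
  filter_upwards [hU.mem_nhds ht] with s hs using (hh s hs).re_self_nonneg (u s)

theorem delbar_comp_re_metric_self (hδ : MetricCompatibleOn U h δ) (hU : IsOpen U)
    (hh : ∀ t ∈ U, IsHermitianMetric (h t)) {u : E → H} (hu : ContDiffOn ℝ (⊤ : ℕ∞) u U)
    (hhol : ∀ t ∈ U, ∀ z, delbar u t z = 0) {g : ℝ → ℝ} (hg : DifferentiableOn ℝ g (Ici 0))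
    {t : E} (ht : t ∈ U) (z : E) :
    delbar (fun s => (g (h s (u s) (u s)).re : ℂ)) t z =
      ((derivWithin g (Ici 0) (h t (u t) (u t)).re : ℝ) : ℂ) * h t (u t) (δ u t z) := by
  rw [delbar_ofReal_comp (hδ.differentiableAt_re_metric_self hU hh hu ht).hasFDerivAt
    (hδ.hasFDerivAt_comp_re_metric_self hU hh hu hg ht), hδ.delbar_re_metric_self hU hh hu hhol ht]

theorem del_delbar_comp_re_metric_self (hδ : MetricCompatibleOn U h δ) (hU : IsOpen U)
    (hh : ∀ t ∈ U, IsHermitianMetric (h t)) {u : E → H} (hu : ContDiffOn ℝ (⊤ : ℕ∞) u U)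
    (hhol : ∀ t ∈ U, ∀ z, delbar u t z = 0) {f : ℝ → ℝ} (hf : DifferentiableOn ℝ f (Ici 0))
    (hf' : DifferentiableOn ℝ (derivWithin f (Ici 0)) (Ici 0)) {z : E}
    (hδu : ContDiffOn ℝ (⊤ : ℕ∞) (fun s => δ u s z) U) {t : E} (ht : t ∈ U) :
    del (fun s => delbar (fun s' => (f (h s' (u s') (u s')).re : ℂ)) s z) t z =
      ((derivWithin (derivWithin f (Ici 0)) (Ici 0) (h t (u t) (u t)).re *
          normSq (h t (δ u t z) (u t)) : ℝ) : ℂ) +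
        ((derivWithin f (Ici 0) (h t (u t) (u t)).re : ℝ) : ℂ) *
          (h t (δ u t z) (δ u t z) + h t (u t) (delbar (fun s => δ u s z) t z)) := by
  have hev : (fun s => delbar (fun s' => (f (h s' (u s') (u s')).re : ℂ)) s z) =ᶠ[𝓝 t]
      fun s => ((derivWithin f (Ici 0) (h s (u s) (u s)).re : ℝ) : ℂ) * h s (u s) (δ u s z) := by
    filter_upwards [hU.mem_nhds ht] with s hs
    exact hδ.delbar_comp_re_metric_self hU hh hu hhol hf hs z
  have hf'F := hδ.hasFDerivAt_comp_re_metric_self hU hh hu hf' ht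
  have hf'Fℂ : DifferentiableAt ℝ
      (fun s => ((derivWithin f (Ici 0) (h s (u s) (u s)).re : ℝ) : ℂ)) t :=
    ofRealCLM.differentiableAt.comp t hf'F.differentiableAt
  rw [del_congr_of_eventuallyEq hev, del_mul hf'Fℂ (hδ.differentiableAt hU hh hu hδu ht),
    del_ofReal_comp (hδ.differentiableAt_re_metric_self hU hh hu ht).hasFDerivAt hf'F,
    hδ.del_re_metric_self hU hh hu hhol ht, hδ u _ hu hδu t ht z,
    (hh t ht).conj_symm (u t) (δ u t z), mul_assoc, mul_conj]
  push_cast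
  ring

end MetricCompatibleOn

end MetricCompatibility

theorem statement_17_general {m : ℕ} {H : Type*} [NormedAddCommGroup H] [NormedSpace ℂ H]
    (U : Set (Fin m → ℂ)) (hU : IsOpen U)
    (h : (Fin m → ℂ) → H → H → ℂ)
    (hadd : ∀ t ∈ U, ∀ u v w' : H, h t (u + v) w' = h t u w' + h t v w')
    (hsmul : ∀ t ∈ U, ∀ (c : ℂ) (u v : H), h t (c • u) v = c * h t u v)
    (hsymm : ∀ t ∈ U, ∀ u v : H, h t u v = starRingEnd ℂ (h t v u))
    (hpos : ∀ t ∈ U, ∀ u : H, u ≠ 0 → 0 < (h t u u).re)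
    (δ : ((Fin m → ℂ) → H) → (Fin m → ℂ) → (Fin m → ℂ) → H)
    (hδ : ∀ u v : (Fin m → ℂ) → H, ContDiffOn ℝ (⊤ : ℕ∞) u U → ContDiffOn ℝ (⊤ : ℕ∞) v U →
      ∀ t ∈ U, ∀ z : Fin m → ℂ,
        del (fun s => h s (u s) (v s)) t z = h t (δ u t z) (v t) + h t (u t) (delbar v t z))
    (hδsm : ∀ u : (Fin m → ℂ) → H, ContDiffOn ℝ (⊤ : ℕ∞) u U →
      ∀ z : Fin m → ℂ, ContDiffOn ℝ (⊤ : ℕ∞) (fun t => δ u t z) U)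
    (hδloc : ∀ u v : (Fin m → ℂ) → H, (∀ s ∈ U, u s = v s) →
      ∀ t ∈ U, ∀ z : Fin m → ℂ, δ u t z = δ v t z)
    (hδzero : ∀ t ∈ U, ∀ z : Fin m → ℂ, δ (fun _ => (0 : H)) t z = 0)
    -- Griffiths seminegativity of the curvature:
    (hGriff : ∀ v : (Fin m → ℂ) → H, ContDiffOn ℝ (⊤ : ℕ∞) v U →
      ∀ t ∈ U, ∀ z : Fin m → ℂ, (h t (curvC δ v t z z) (v t)).re ≤ 0)
    (f : ℝ → ℝ)
    (hf2 : ContDiffOn ℝ 2 f (Set.Ici (0 : ℝ)))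
    (hfmono : StrictMonoOn f (Set.Ici (0 : ℝ)))
    (hfcond : ∀ x : ℝ, 0 ≤ x → 0 ≤ deriv f x + deriv (deriv f) x * x)
    (u : (Fin m → ℂ) → H) (hu : ContDiffOn ℝ (⊤ : ℕ∞) u U)
    (hhol : ∀ t ∈ U, ∀ z : Fin m → ℂ, delbar u t z = 0) :
    PshOn (fun t => f ((h t (u t) (u t)).re)) U := by
  have hh t (ht : t ∈ U) : IsHermitianMetric (h t) :=
    ⟨hadd t ht, hsmul t ht, hsymm t ht, hpos t ht⟩
  have hδ' : MetricCompatibleOn U h δ := hδ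
  have hf' : DifferentiableOn ℝ (derivWithin f (Ici 0)) (Ici 0) :=
    (hf2.derivWithin (uniqueDiffOn_Ici 0) le_rfl).differentiableOn one_ne_zero
  intro t ht z
  have hΘ : delbar (fun s => δ u s z) t z = -curvC δ u t z z := by
    rw [curvC, hδloc _ _ (fun s hs => hhol s hs z) t ht z, hδzero t ht z, zero_sub, neg_neg]
  rw [hδ'.del_delbar_comp_re_metric_self hU hh hu hhol (hf2.differentiableOn two_ne_zero) hf'
    (hδsm u hu z) ht, hΘ]
  have hR : 0 ≤ (h t (u t) (-curvC δ u t z z)).re := by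
    rw [(hh t ht).conj_symm, conj_re, (hh t ht).neg_left, neg_re]
    linarith [hGriff u hu t ht z]
  have hA := (hh t ht).re_self_nonneg (δ u t z)
  have hCS := (hh t ht).normSq_le (δ u t z) (u t)
  have hα := hfmono.monotoneOn.derivWithin_nonneg (x := (h t (u t) (u t)).re)
  have hcond := derivWithin_Ici_add_mul_nonneg hfmono.monotoneOn hfcond
    ((hh t ht).re_self_nonneg (u t))
  simp only [add_re, ofReal_re, re_ofReal_mul]
  rcases le_or_gt 0 (derivWithin (derivWithin f (Ici 0)) (Ici 0) (h t (u t) (u t)).re) with hβ | hβ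
  · exact add_nonneg (mul_nonneg hβ (normSq_nonneg _)) (mul_nonneg hα (add_nonneg hA hR))
  · nlinarith [mul_nonneg hα hR, mul_nonneg hA hcond, mul_le_mul_of_nonpos_left hCS hβ.le]

/-- `h` with Chern connection `D = δ + ∂̄` and Griffiths-seminegative curvature
(`Re h(Θ_{zz̄} v, v) ≤ 0` for all smooth sections `v`), and `f : [0,∞) → ℝ` twice
differentiable, strictly increasing, concave, with `f'(x) + f''(x)·x ≥ 0` for all `x ≥ 0`.
Then for every holomorphic section `u` of `U × H` (smooth, with `∂̄u = 0` on `U`), the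
function `t ↦ f(‖u t‖²_{h_t})` is plurisubharmonic on `U`. -/
theorem statement_17 {m : ℕ} {H : Type*} [NormedAddCommGroup H] [NormedSpace ℂ H]
    (U : Set (Fin m → ℂ)) (hU : IsOpen U)
    (h : (Fin m → ℂ) → H → H → ℂ)
    (hadd : ∀ t ∈ U, ∀ u v w' : H, h t (u + v) w' = h t u w' + h t v w')
    (hsub : ∀ t ∈ U, ∀ u v w' : H, h t (u - v) w' = h t u w' - h t v w')
    (hsmul : ∀ t ∈ U, ∀ (c : ℂ) (u v : H), h t (c • u) v = c * h t u v)
    (hsymm : ∀ t ∈ U, ∀ u v : H, h t u v = starRingEnd ℂ (h t v u))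
    (hpos : ∀ t ∈ U, ∀ u : H, u ≠ 0 → 0 < (h t u u).re)
    (δ : ((Fin m → ℂ) → H) → (Fin m → ℂ) → (Fin m → ℂ) → H)
    (hδ : ∀ u v : (Fin m → ℂ) → H, ContDiffOn ℝ (⊤ : ℕ∞) u U → ContDiffOn ℝ (⊤ : ℕ∞) v U →
      ∀ t ∈ U, ∀ z : Fin m → ℂ,
        del (fun s => h s (u s) (v s)) t z = h t (δ u t z) (v t) + h t (u t) (delbar v t z))
    (hδsm : ∀ u : (Fin m → ℂ) → H, ContDiffOn ℝ (⊤ : ℕ∞) u U →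
      ∀ z : Fin m → ℂ, ContDiffOn ℝ (⊤ : ℕ∞) (fun t => δ u t z) U)
    (hδloc : ∀ u v : (Fin m → ℂ) → H, (∀ s ∈ U, u s = v s) →
      ∀ t ∈ U, ∀ z : Fin m → ℂ, δ u t z = δ v t z)
    (hδzero : ∀ t ∈ U, ∀ z : Fin m → ℂ, δ (fun _ => (0 : H)) t z = 0)
    -- Griffiths seminegativity of the curvature:
    (hGriff : ∀ v : (Fin m → ℂ) → H, ContDiffOn ℝ (⊤ : ℕ∞) v U →
      ∀ t ∈ U, ∀ z : Fin m → ℂ, (h t (curvC δ v t z z) (v t)).re ≤ 0)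
    (f : ℝ → ℝ)
    (hf2 : ContDiffOn ℝ 2 f (Set.Ici (0 : ℝ)))
    (hfmono : StrictMonoOn f (Set.Ici (0 : ℝ)))
    (hfconc : ConcaveOn ℝ (Set.Ici (0 : ℝ)) f)
    (hfcond : ∀ x : ℝ, 0 ≤ x → 0 ≤ deriv f x + deriv (deriv f) x * x)
    (u : (Fin m → ℂ) → H) (hu : ContDiffOn ℝ (⊤ : ℕ∞) u U)
    (hhol : ∀ t ∈ U, ∀ z : Fin m → ℂ, delbar u t z = 0) :
    PshOn (fun t => f ((h t (u t) (u t)).re)) U :=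
  statement_17_general U hU h hadd hsmul hsymm hpos δ hδ hδsm hδloc hδzero hGriff f hf2 hfmono
    hfcond u hu hhol
end
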